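/- Let X be a random variable (continuous or discrete), Y a random variable with finite outcome set 𝒴, and suppose Y = f(X) for a single-valued function f. Then for every β ∈ [0,1] and every random variable T satisfying the Markov condition Y − X − T, the IB Lagrangian obeys I(Y;T) − β·I(X;T) ≤ (1−β)·H(Y), and the bottleneck variable T_copy := f(X) = Y achieves equality; hence T_copy maximizes the IB Lagrangian simultaneously for all β ∈ [0,1]. -/
import Mathlib


noncomputable section

/-- `p` is a joint probability distribution on the finite product `A × B`. -/
def IsJoint {A B : Type*} [Fintype A] [Fintype B] (p : A → B → ℝ) : Prop :=
  (∀ a b, 0 ≤ p a b) ∧ (∑ a, ∑ b, p a b) = 1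

/-- `κ` is a channel (conditional distribution) from `A` to the finite type `B`. -/
def IsChannel {A B : Type*} [Fintype B] (κ : A → B → ℝ) : Prop :=
  ∀ a, (∀ b, 0 ≤ κ a b) ∧ (∑ b, κ a b) = 1

/-- Marginal distribution of the first coordinate. -/
def margFst {A B : Type*} [Fintype B] (p : A → B → ℝ) : A → ℝ := fun a => ∑ b, p a b

/-- Marginal distribution of the second coordinate. -/
def margSnd {A B : Type*} [Fintype A] (p : A → B → ℝ) : B → ℝ := fun b => ∑ a, p a b

/-- ℓ1 distance between two joint distributions. -/
def l1 {A B : Type*} [Fintype A] [Fintype B] (p q : A → B → ℝ) : ℝ :=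
  ∑ a, ∑ b, |p a b - q a b|

/-- Shannon entropy of a distribution on a finite type. -/
def ent {A : Type*} [Fintype A] (q : A → ℝ) : ℝ := -∑ a, q a * Real.log (q a)

/-- Conditional entropy `H(B | A)` of the second coordinate given the first. -/
def condEnt {A B : Type*} [Fintype A] [Fintype B] (p : A → B → ℝ) : ℝ :=
  -∑ a, ∑ b, p a b * Real.log (p a b / margFst p a)

/-- Mutual information `I(A;B)` of a joint distribution, as `H(B) - H(B|A)`. -/
def mi {A B : Type*} [Fintype A] [Fintype B] (p : A → B → ℝ) : ℝ :=
  ent (margSnd p) - condEnt p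

/-- Joint distribution of `(X,T)` when `T` is generated from `X` via channel `κ`
(so that the Markov condition `Y - X - T` holds). -/
def jointXT {X Y T : Type*} [Fintype Y] (p : X → Y → ℝ) (κ : X → T → ℝ) : X → T → ℝ :=
  fun x t => (∑ y, p x y) * κ x t

/-- Joint distribution of `(T,Y)` when `T` is generated from `X` via channel `κ`. -/
def jointTY {X Y T : Type*} [Fintype X] (p : X → Y → ℝ) (κ : X → T → ℝ) : T → Y → ℝ :=
  fun t y => ∑ x, p x y * κ x t

/-- Joint distribution of `(Y,T)` when `T` is generated from `X` via channel `κ`. -/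
def jointYT {X Y T : Type*} [Fintype X] (p : X → Y → ℝ) (κ : X → T → ℝ) : Y → T → ℝ :=
  fun y t => ∑ x, p x y * κ x t

/-- The information-bottleneck curve `F(r)`: the supremum of `I(Y;T)` over all (discrete)
bottleneck variables `T` obeying the Markov condition `Y - X - T` with `I(X;T) ≤ r`. -/
def IBcurve {X Y : Type*} [Fintype X] [Fintype Y] (p : X → Y → ℝ) (r : ℝ) : ℝ :=
  sSup { v : ℝ | ∃ (n : ℕ) (κ : X → Fin n → ℝ), IsChannel κ ∧
    mi (jointXT p κ) ≤ r ∧ v = mi (jointTY p κ) }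

/-- `Y` is the deterministic function `f` of `X` under the joint distribution `p`:
given `X = x`, all conditional mass is on `f x`. -/
def Determ {X Y : Type*} (p : X → Y → ℝ) (f : X → Y) : Prop :=
  ∀ x y, y ≠ f x → p x y = 0

-- AUX

lemma gibbs0 {T : Type*} [Fintype T] (a b : T → ℝ) (ha : ∀ t, 0 ≤ a t)
    (hb : ∀ t, 0 ≤ b t) (hab : ∀ t, 0 < a t → 0 < b t) :
    ∑ t, a t * (Real.log (b t) - Real.log (a t)) ≤ (∑ t, b t) - ∑ t, a t := by
  rw [← Finset.sum_sub_distrib]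
  refine Finset.sum_le_sum fun t _ => ?_
  rcases (ha t).eq_or_lt with h | h
  · simp [← h, hb t]
  · have hbt := hab t h
    rw [← Real.log_div hbt.ne' h.ne']
    have h1 : Real.log (b t / a t) ≤ b t / a t - 1 :=
      Real.log_le_sub_one_of_pos (by positivity)
    calc a t * Real.log (b t / a t) ≤ a t * (b t / a t - 1) :=
          mul_le_mul_of_nonneg_left h1 h.le
      _ = b t - a t := by field_simp

lemma condEnt_nonneg {A B : Type*} [Fintype A] [Fintype B] (p : A → B → ℝ)
    (hp : ∀ a b, 0 ≤ p a b) : 0 ≤ condEnt p := by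
  unfold condEnt
  rw [neg_nonneg]
  refine Finset.sum_nonpos fun a _ => Finset.sum_nonpos fun b _ => ?_
  rcases (hp a b).eq_or_lt with h | h
  · simp [← h]
  · have hm : p a b ≤ margFst p a :=
      Finset.single_le_sum (fun b _ => hp a b) (Finset.mem_univ b)
    have hm0 : 0 < margFst p a := h.trans_le hm
    have hl : Real.log (p a b / margFst p a) ≤ 0 :=
      Real.log_nonpos (by positivity) ((div_le_one hm0).2 hm)
    nlinarith

lemma margSnd_jointTY {X Y T : Type*} [Fintype X] [Fintype T]
    (p : X → Y → ℝ) (κ : X → T → ℝ) (hκ : IsChannel κ) :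
    margSnd (jointTY p κ) = fun y => ∑ x, p x y := by
  funext y
  show ∑ t, ∑ x, p x y * κ x t = _
  rw [Finset.sum_comm]
  refine Finset.sum_congr rfl fun x _ => ?_
  rw [← Finset.mul_sum, (hκ x).2, mul_one]

lemma margFst_jointTY {X Y T : Type*} [Fintype X] [Fintype Y]
    (p : X → Y → ℝ) (κ : X → T → ℝ) :
    margFst (jointTY p κ) = fun t => ∑ x, (∑ y, p x y) * κ x t := by
  funext t
  show ∑ y, ∑ x, p x y * κ x t = _
  rw [Finset.sum_comm]
  exact Finset.sum_congr rfl fun x _ => by rw [Finset.sum_mul]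

lemma mi_jointTY_le_ent {X Y T : Type*} [Fintype X] [Fintype Y] [Fintype T]
    (p : X → Y → ℝ) (κ : X → T → ℝ) (hp : ∀ x y, 0 ≤ p x y) (hκ : IsChannel κ) :
    mi (jointTY p κ) ≤ ent (margSnd p) := by
  unfold mi
  rw [margSnd_jointTY p κ hκ]
  have h := condEnt_nonneg (jointTY p κ)
    (fun t y => Finset.sum_nonneg fun x _ => mul_nonneg (hp x y) ((hκ x).1 t))
  have hms : margSnd p = fun y => ∑ x, p x y := rfl
  rw [hms]; linarith

lemma dpi {X Y T : Type*} [Fintype X] [Fintype Y] [Fintype T]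
    (p : X → Y → ℝ) (f : X → Y) (κ : X → T → ℝ)
    (hp : ∀ x y, 0 ≤ p x y) (hdet : Determ p f) (hκ : IsChannel κ) :
    mi (jointTY p κ) ≤ mi (jointXT p κ) := by
  have hκ0 : ∀ x t, 0 ≤ κ x t := fun x t => (hκ x).1 t
  have hκ1 : ∀ x, ∑ t, κ x t = 1 := fun x => (hκ x).2
  have hpX0 : ∀ x, (0:ℝ) ≤ ∑ y, p x y := fun x => Finset.sum_nonneg fun y _ => hp x y
  have hq0 : ∀ t y, (0:ℝ) ≤ ∑ x, p x y * κ x t :=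
    fun t y => Finset.sum_nonneg fun x _ => mul_nonneg (hp x y) (hκ0 x t)
  have hs0 : ∀ y, (0:ℝ) ≤ ∑ x, p x y := fun y => Finset.sum_nonneg fun x _ => hp x y
  have hpXf : ∀ x, (∑ y, p x y) = p x (f x) := fun x =>
    Finset.sum_eq_single (f x) (fun y _ hy => hdet x y hy) (fun h => absurd (Finset.mem_univ _) h)
  have hqsum : ∀ y, (∑ t, ∑ x, p x y * κ x t) = ∑ x, p x y := by
    intro y
    rw [Finset.sum_comm]
    exact Finset.sum_congr rfl fun x _ => by rw [← Finset.mul_sum, hκ1 x, mul_one]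
  have hrsum : ∀ t, (∑ y, ∑ x, p x y * κ x t) = ∑ x, (∑ y, p x y) * κ x t := by
    intro t
    rw [Finset.sum_comm]
    exact Finset.sum_congr rfl fun x _ => by rw [Finset.sum_mul]
  -- closed form of mi (jointTY)
  have hmiTY : mi (jointTY p κ) = ent (margSnd p)
      + (∑ t, ∑ y, (∑ x, p x y * κ x t) * Real.log (∑ x, p x y * κ x t))
      - ∑ t, (∑ x, (∑ y, p x y) * κ x t) * Real.log (∑ x, (∑ y, p x y) * κ x t) := by
    unfold mi
    rw [margSnd_jointTY p κ hκ]
    have hms : margSnd p = fun y => ∑ x, p x y := rfl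
    rw [hms]
    have hce : condEnt (jointTY p κ)
        = -((∑ t, ∑ y, (∑ x, p x y * κ x t) * Real.log (∑ x, p x y * κ x t))
          - ∑ t, (∑ x, (∑ y, p x y) * κ x t) * Real.log (∑ x, (∑ y, p x y) * κ x t)) := by
      unfold condEnt
      rw [margFst_jointTY]
      congr 1
      rw [← Finset.sum_sub_distrib]
      refine Finset.sum_congr rfl fun t _ => ?_
      have hfac : (∑ x, (∑ y, p x y) * κ x t) * Real.log (∑ x, (∑ y, p x y) * κ x t)
          = ∑ y, (∑ x, p x y * κ x t) * Real.log (∑ x, (∑ y, p x y) * κ x t) := by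
        rw [← Finset.sum_mul, hrsum t]
      rw [hfac, ← Finset.sum_sub_distrib]
      refine Finset.sum_congr rfl fun y _ => ?_
      rcases (hq0 t y).eq_or_lt with h | h
      · show (∑ x, p x y * κ x t) * _ = _
        rw [← h]; ring_nf
      · have hle : (∑ x, p x y * κ x t) ≤ ∑ x, (∑ y, p x y) * κ x t := by
          rw [← hrsum t]
          exact Finset.single_le_sum (fun y' _ => hq0 t y') (Finset.mem_univ y)
        have hrpos : (0:ℝ) < ∑ x, (∑ y, p x y) * κ x t := h.trans_le hle
        show (∑ x, p x y * κ x t) *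
            Real.log ((∑ x, p x y * κ x t) / (∑ x, (∑ y, p x y) * κ x t)) = _
        rw [Real.log_div h.ne' hrpos.ne']
        ring
    rw [hce]; ring
  -- closed form of mi (jointXT)
  have hmiXT : mi (jointXT p κ)
      = -(∑ t, (∑ x, (∑ y, p x y) * κ x t) * Real.log (∑ x, (∑ y, p x y) * κ x t))
        + ∑ x, ∑ t, (∑ y, p x y) * κ x t * Real.log (κ x t) := by
    unfold mi
    have hms : margSnd (jointXT p κ) = fun t => ∑ x, (∑ y, p x y) * κ x t := rfl
    have hce : condEnt (jointXT p κ)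
        = -∑ x, ∑ t, (∑ y, p x y) * κ x t * Real.log (κ x t) := by
      unfold condEnt
      congr 1
      refine Finset.sum_congr rfl fun x _ => Finset.sum_congr rfl fun t _ => ?_
      have hmf : margFst (jointXT p κ) x = ∑ y, p x y := by
        show (∑ t, (∑ y, p x y) * κ x t) = _
        rw [← Finset.mul_sum, hκ1 x, mul_one]
      show (∑ y, p x y) * κ x t * Real.log ((∑ y, p x y) * κ x t / margFst (jointXT p κ) x) = _
      rw [hmf]
      rcases (hpX0 x).eq_or_lt with h | h
      · rw [← h]; ring
      · rw [mul_div_cancel_left₀ _ h.ne']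
    rw [hms, hce, ent]; ring
  rw [hmiTY, hmiXT]
  have hregroup : ∀ g : T → Y → ℝ, (∑ t, ∑ y, (∑ x, p x y * κ x t) * g t y)
      = ∑ x, ∑ t, (∑ y, p x y) * κ x t * g t (f x) := by
    intro g
    calc (∑ t, ∑ y, (∑ x, p x y * κ x t) * g t y)
        = ∑ t, ∑ y, ∑ x, p x y * κ x t * g t y :=
          Finset.sum_congr rfl fun t _ => Finset.sum_congr rfl fun y _ => by
            rw [Finset.sum_mul]
      _ = ∑ y, ∑ t, ∑ x, p x y * κ x t * g t y := Finset.sum_comm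
      _ = ∑ y, ∑ x, ∑ t, p x y * κ x t * g t y :=
          Finset.sum_congr rfl fun y _ => Finset.sum_comm
      _ = ∑ x, ∑ y, ∑ t, p x y * κ x t * g t y := Finset.sum_comm
      _ = ∑ x, ∑ t, ∑ y, p x y * κ x t * g t y :=
          Finset.sum_congr rfl fun x _ => Finset.sum_comm
      _ = ∑ x, ∑ t, (∑ y, p x y) * κ x t * g t (f x) := by
          refine Finset.sum_congr rfl fun x _ => Finset.sum_congr rfl fun t _ => ?_
          rw [hpXf x]
          exact Finset.sum_eq_single (f x)
            (fun y _ hy => by rw [hdet x y hy, zero_mul, zero_mul])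
            (fun h => absurd (Finset.mem_univ _) h)
  have hent : ent (margSnd p) = -∑ t, ∑ y, (∑ x, p x y * κ x t) * Real.log (∑ x, p x y) := by
    rw [Finset.sum_comm]
    show ent (fun y => ∑ x, p x y) = _
    unfold ent
    congr 1
    refine Finset.sum_congr rfl fun y _ => ?_
    rw [← Finset.sum_mul, hqsum y]
  rw [hent]
  have hcomb : -(∑ t, ∑ y, (∑ x, p x y * κ x t) * Real.log (∑ x, p x y))
      + (∑ t, ∑ y, (∑ x, p x y * κ x t) * Real.log (∑ x, p x y * κ x t))
      = ∑ t, ∑ y, (∑ x, p x y * κ x t) *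
          (Real.log (∑ x, p x y * κ x t) - Real.log (∑ x, p x y)) := by
    rw [neg_add_eq_sub, ← Finset.sum_sub_distrib]
    refine Finset.sum_congr rfl fun t _ => ?_
    rw [← Finset.sum_sub_distrib]
    exact Finset.sum_congr rfl fun y _ => by ring
  have hmain : -(∑ t, ∑ y, (∑ x, p x y * κ x t) * Real.log (∑ x, p x y))
      + (∑ t, ∑ y, (∑ x, p x y * κ x t) * Real.log (∑ x, p x y * κ x t))
      ≤ ∑ x, ∑ t, (∑ y, p x y) * κ x t * Real.log (κ x t) := by
    rw [hcomb, hregroup (fun t y => Real.log (∑ x, p x y * κ x t) - Real.log (∑ x, p x y))]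
    refine Finset.sum_le_sum fun x _ => ?_
    rcases (hpX0 x).eq_or_lt with h | h
    · simp [← h]
    · have hpfx : 0 < p x (f x) := by rw [← hpXf x]; exact h
      have hsfx : 0 < ∑ x', p x' (f x) :=
        hpfx.trans_le (Finset.single_le_sum (fun x' _ => hp x' (f x)) (Finset.mem_univ x))
      have hab : ∀ t, 0 < κ x t → 0 < (∑ x', p x' (f x) * κ x' t) / (∑ x', p x' (f x)) := by
        intro t ht
        refine div_pos ?_ hsfx
        exact lt_of_lt_of_le (mul_pos hpfx ht)
          (Finset.single_le_sum (fun x' _ => mul_nonneg (hp x' (f x)) (hκ0 x' t))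
            (Finset.mem_univ x))
      have key := gibbs0 (κ x) (fun t => (∑ x', p x' (f x) * κ x' t) / (∑ x', p x' (f x)))
        (hκ0 x) (fun t => div_nonneg (hq0 t (f x)) hsfx.le) hab
      rw [hκ1 x, ← Finset.sum_div, hqsum (f x), div_self hsfx.ne', sub_self] at key
      have key2 : ∑ t, κ x t * (Real.log (∑ x', p x' (f x) * κ x' t)
          - Real.log (∑ x', p x' (f x)) - Real.log (κ x t)) ≤ 0 := by
        refine le_trans (le_of_eq (Finset.sum_congr rfl fun t _ => ?_)) key
        rcases (hκ0 x t).eq_or_lt with hk | hk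
        · rw [← hk]; ring
        · have hqpos : 0 < ∑ x', p x' (f x) * κ x' t :=
            lt_of_lt_of_le (mul_pos hpfx hk)
              (Finset.single_le_sum (fun x' _ => mul_nonneg (hp x' (f x)) (hκ0 x' t))
                (Finset.mem_univ x))
          rw [Real.log_div hqpos.ne' hsfx.ne']
      rw [← sub_nonpos, ← Finset.sum_sub_distrib]
      have heq : ∑ t, ((∑ y, p x y) * κ x t *
            (Real.log (∑ x', p x' (f x) * κ x' t) - Real.log (∑ x', p x' (f x)))
          - (∑ y, p x y) * κ x t * Real.log (κ x t))
          = (∑ y, p x y) * ∑ t, κ x t * (Real.log (∑ x', p x' (f x) * κ x' t)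
            - Real.log (∑ x', p x' (f x)) - Real.log (κ x t)) := by
        rw [Finset.mul_sum]
        exact Finset.sum_congr rfl fun t _ => by ring
      rw [heq]
      exact mul_nonpos_iff.2 (Or.inl ⟨h.le, key2⟩)
  linarith [hmain]

-- copy channel lemmas

lemma copy_channel {X Y : Type*} [Fintype Y] [DecidableEq Y] (f : X → Y) :
    IsChannel (fun x t => if t = f x then (1:ℝ) else 0) := by
  intro x
  constructor
  · intro t; dsimp only; split <;> norm_num
  · simp

lemma hpXf0 {X Y : Type*} [Fintype Y] (p : X → Y → ℝ) (f : X → Y) (hdet : Determ p f) :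
    ∀ x, (∑ y, p x y) = p x (f x) := fun x =>
  Finset.sum_eq_single (f x) (fun y _ hy => hdet x y hy) (fun h => absurd (Finset.mem_univ _) h)

lemma jointTY_copy {X Y : Type*} [Fintype X] [Fintype Y] [DecidableEq Y]
    (p : X → Y → ℝ) (f : X → Y) (hdet : Determ p f) :
    jointTY p (fun x t => if t = f x then (1:ℝ) else 0)
      = fun t y => if t = y then margSnd p y else 0 := by
  funext t y
  show (∑ x, p x y * if t = f x then (1:ℝ) else 0) = _
  by_cases h : t = y
  · subst h
    rw [if_pos rfl]
    refine Finset.sum_congr rfl fun x _ => ?_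
    by_cases hfx : t = f x
    · rw [if_pos hfx, mul_one]
    · rw [hdet x t hfx, if_neg hfx, zero_mul]
  · rw [if_neg h]
    refine Finset.sum_eq_zero fun x _ => ?_
    by_cases hfx : t = f x
    · rw [hdet x y (fun he => h (hfx.trans he.symm ▸ rfl))]
      · ring
    · rw [if_neg hfx, mul_zero]

lemma mi_TY_copy {X Y : Type*} [Fintype X] [Fintype Y] [DecidableEq Y]
    (p : X → Y → ℝ) (f : X → Y) (hp : ∀ x y, 0 ≤ p x y) (hdet : Determ p f) :
    mi (jointTY p (fun x t => if t = f x then (1:ℝ) else 0)) = ent (margSnd p) := by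
  rw [mi, jointTY_copy p f hdet]
  have hmf : margFst (fun t y => if t = y then margSnd p y else 0) = margSnd p := by
    funext t
    show (∑ y, if t = y then margSnd p y else 0) = _
    simp
  have hms : margSnd (fun t y => if t = y then margSnd p y else 0) = margSnd p := by
    funext y
    show (∑ t, if t = y then margSnd p y else 0) = _
    simp
  have hce : condEnt (fun t y => if t = y then margSnd p y else 0) = 0 := by
    rw [condEnt, hmf, neg_eq_zero]
    refine Finset.sum_eq_zero fun t _ => Finset.sum_eq_zero fun y _ => ?_
    by_cases h : t = y
    · subst h
      rw [if_pos rfl]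
      rcases eq_or_ne (margSnd p t) 0 with h0 | h0
      · rw [h0, zero_mul]
      · rw [div_self h0, Real.log_one, mul_zero]
    · rw [if_neg h, zero_mul]
  rw [hms, hce, sub_zero]

lemma jointXT_copy_margSnd {X Y : Type*} [Fintype X] [Fintype Y] [DecidableEq Y]
    (p : X → Y → ℝ) (f : X → Y) (hdet : Determ p f) :
    margSnd (jointXT p (fun x t => if t = f x then (1:ℝ) else 0)) = margSnd p := by
  funext t
  show (∑ x, (∑ y, p x y) * if t = f x then (1:ℝ) else 0) = ∑ x, p x t
  refine Finset.sum_congr rfl fun x _ => ?_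
  by_cases hfx : t = f x
  · rw [if_pos hfx, mul_one, hpXf0 p f hdet, hfx]
  · rw [if_neg hfx, mul_zero, hdet x t hfx]

lemma mi_XT_copy {X Y : Type*} [Fintype X] [Fintype Y] [DecidableEq Y]
    (p : X → Y → ℝ) (f : X → Y) (hp : ∀ x y, 0 ≤ p x y) (hdet : Determ p f) :
    mi (jointXT p (fun x t => if t = f x then (1:ℝ) else 0)) = ent (margSnd p) := by
  rw [mi, jointXT_copy_margSnd p f hdet]
  have hce : condEnt (jointXT p (fun x t => if t = f x then (1:ℝ) else 0)) = 0 := by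
    rw [condEnt, neg_eq_zero]
    refine Finset.sum_eq_zero fun x _ => Finset.sum_eq_zero fun t _ => ?_
    have hmf : margFst (jointXT p (fun x t => if t = f x then (1:ℝ) else 0)) x
        = ∑ y, p x y := by
      show (∑ t, (∑ y, p x y) * if t = f x then (1:ℝ) else 0) = _
      rw [← Finset.mul_sum]
      simp
    simp only [jointXT]
    rw [hmf]
    by_cases hfx : t = f x
    · rw [if_pos hfx, mul_one]
      rcases eq_or_ne (∑ y, p x y) 0 with h0 | h0
      · rw [h0, zero_mul]
      · rw [div_self h0, Real.log_one, mul_zero]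
    · rw [if_neg hfx, mul_zero, zero_mul]
  rw [hce, sub_zero]

/-- Suppose `Y = f(X)` (with `Y` finite).  Then for every `β ∈ [0,1]` and
every bottleneck variable `T` satisfying the Markov condition `Y - X - T` (i.e. given by a
channel `κ` from `X`), the IB Lagrangian obeys `I(Y;T) - β I(X;T) ≤ (1-β) H(Y)`; and the
copy variable `T_copy := f(X) = Y` achieves equality, hence maximizes the IB Lagrangian
simultaneously for all `β ∈ [0,1]`. -/
theorem copy_maximizes_IB_Lagrangian {X Y : Type*} [Fintype X] [Fintype Y] [DecidableEq Y]
    (p : X → Y → ℝ) (f : X → Y)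
    (hp : IsJoint p) (hdet : Determ p f) :
    ∀ β ∈ Set.Icc (0:ℝ) 1,
      (∀ (T : Type) [Fintype T] (κ : X → T → ℝ), IsChannel κ →
        mi (jointTY p κ) - β * mi (jointXT p κ) ≤ (1 - β) * ent (margSnd p)) ∧
      mi (jointTY p (fun x t => if t = f x then (1:ℝ) else 0)) -
        β * mi (jointXT p (fun x t => if t = f x then (1:ℝ) else 0)) =
          (1 - β) * ent (margSnd p) := by
  intro β hβ
  obtain ⟨hβ0, hβ1⟩ := hβ
  constructor
  · intro T _ κ hκ
    have h1 := mi_jointTY_le_ent p κ hp.1 hκ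
    have h2 := dpi p f κ hp.1 hdet hκ
    nlinarith [mul_nonneg (sub_nonneg.2 hβ1) (sub_nonneg.2 h1),
      mul_nonneg hβ0 (sub_nonneg.2 h2)]
  · rw [mi_TY_copy p f hp.1 hdet, mi_XT_copy p f hp.1 hdet]
    ring
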